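/- arXiv:1507.00283 — 3 statements merged into one kernel-verified Lean document; each statement's English description precedes it below -/
import Mathlib

section
/- The Jacobi symmetrizer applied to any polynomial yields a symmetric polynomial: for any polynomial b in variables x_1,...,x_n over a field of characteristic zero, the sum over all permutations w in S_n of w·(b / ∏_{i<j}(x_j - x_i)) is a symmetric polynomial in x_1,...,x_n (in particular, the a priori rational expression is a polynomial). -/
/-!
The antisymmetrization `A = ∑_w sign w • (w · b)` is alternating, and since `w · Δ = sign w • Δ`
for the Vandermonde product `Δ`, the Jacobi symmetrizer equals `A / Δ`. An alternating polynomial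
changes sign under the transposition `(i j)`, so `x_j - x_i` divides it once `2` is invertible;
these linear forms are pairwise non-associated primes, so `Δ` divides `A`. The quotient of two
alternating polynomials is symmetric.
-/

open MvPolynomial

theorem Int.cast_units_mul_self {R : Type*} [Ring R] (u : ℤˣ) :
    ((u : ℤ) : R) * (u : ℤ) = 1 := by
  rw [← Int.cast_mul, ← Units.val_mul, Int.units_mul_self, Units.val_one, Int.cast_one]

namespace MvPolynomial

open Equiv Finset Matrix

variable {σ R : Type*}

section Alternating

variable [CommRing R] [Fintype σ] [DecidableEq σ]

def IsAlternating (f : MvPolynomial σ R) : Prop :=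
  ∀ e : Perm σ, rename e f = (Perm.sign e : ℤ) * f

noncomputable def antisymmetrize (f : MvPolynomial σ R) : MvPolynomial σ R :=
  ∑ w : Perm σ, (Perm.sign w : ℤ) * rename w f

theorem isAlternating_antisymmetrize (f : MvPolynomial σ R) :
    (antisymmetrize f).IsAlternating := by
  intro e
  rw [antisymmetrize, map_sum, mul_sum]
  refine Fintype.sum_equiv (Equiv.mulLeft e) _ _ fun w => ?_
  rw [map_mul, map_intCast, rename_rename, Equiv.coe_mulLeft, Perm.sign_mul, Units.val_mul,
    Int.cast_mul, ← mul_assoc, ← mul_assoc, Int.cast_units_mul_self, one_mul]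
  rfl

theorem IsAlternating.isSymmetric_of_mul [IsDomain R] {Δ p : MvPolynomial σ R}
    (hΔ : Δ.IsAlternating) (hΔ0 : Δ ≠ 0) (h : (Δ * p).IsAlternating) : p.IsSymmetric := by
  intro e
  have hsign : ((Perm.sign e : ℤ) : MvPolynomial σ R) ≠ 0 :=
    ((Perm.sign e).isUnit.map (Int.castRingHom _)).ne_zero
  refine mul_left_cancel₀ (mul_ne_zero hsign hΔ0) ?_
  simpa only [map_mul, hΔ e, mul_assoc] using h e

theorem sum_div_rename_eq_antisymmetrize_div {F : Type*} [Field F]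
    (φ : MvPolynomial σ R →+* F) {Δ : MvPolynomial σ R} (hΔ : Δ.IsAlternating)
    (f : MvPolynomial σ R) :
    ∑ w : Perm σ, φ (rename w f) / φ (rename w Δ) = φ (antisymmetrize f) / φ Δ := by
  rw [antisymmetrize, map_sum, sum_div]
  refine Fintype.sum_congr _ _ fun w => ?_
  have hinv : (((Perm.sign w : ℤ) : F))⁻¹ = (Perm.sign w : ℤ) :=
    inv_eq_of_mul_eq_one_right (Int.cast_units_mul_self _)
  rw [hΔ w, map_mul, map_mul, map_intCast, div_mul_eq_div_div, div_eq_mul_inv (φ _), hinv,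
    mul_comm (φ _)]

end Alternating

section Divisibility

variable [CommRing R]

theorem X_sub_X_dvd_sub_rename_swap [DecidableEq σ] (i j : σ) (f : MvPolynomial σ R) :
    X j - X i ∣ f - rename (swap i j) f := by
  induction f using MvPolynomial.induction_on with
  | C a => simp
  | add p q hp hq =>
    rw [map_add, add_sub_add_comm]
    exact dvd_add hp hq
  | mul_X p k hp =>
    have hk : (X j - X i : MvPolynomial σ R) ∣ X k - X (swap i j k) := by
      rcases eq_or_ne k i with rfl | hki
      · exact ⟨-1, by rw [swap_apply_left]; ring⟩
      rcases eq_or_ne k j with rfl | hkj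
      · rw [swap_apply_right]
      · rw [swap_apply_of_ne_of_ne hki hkj, sub_self]
        exact dvd_zero _
    have : p * X k - rename (swap i j) (p * X k) =
        (p - rename (swap i j) p) * X (swap i j k) + p * (X k - X (swap i j k)) := by
      rw [map_mul, rename_X]; ring
    rw [this]
    exact dvd_add (hp.mul_right _) (hk.mul_left _)

theorem X_sub_X_dvd_of_isAlternating [Fintype σ] [DecidableEq σ] [Invertible (2 : R)]
    {f : MvPolynomial σ R} (hf : f.IsAlternating) {i j : σ} (hij : i ≠ j) : X j - X i ∣ f := by
  have hswap : f - rename (swap i j) f = f + f := by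
    rw [hf, Perm.sign_swap hij]; push_cast; ring
  have hdvd := X_sub_X_dvd_sub_rename_swap (R := R) i j f
  rw [hswap] at hdvd
  rw [← invOf_two_smul_add_invOf_two_smul R f, ← smul_add, smul_eq_C_mul]
  exact hdvd.mul_left _

theorem prime_X_sub_X [IsDomain R] {i j : σ} (h : i ≠ j) :
    Prime (X j - X i : MvPolynomial σ R) := by
  classical
  let e : Option {k : σ // k ≠ j} ≃ σ := Equiv.optionSubtypeNe j
  let φ := (renameEquiv R e.symm).trans (optionEquivLeft R {k : σ // k ≠ j})
  rw [← MulEquiv.prime_iff φ.toMulEquiv]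
  have : φ (X j - X i) = Polynomial.X - Polynomial.C (X ⟨i, h⟩) := by
    show (optionEquivLeft R _) (rename e.symm (X j - X i)) = _
    rw [map_sub, rename_X, rename_X, Equiv.optionSubtypeNe_symm_self,
      Equiv.optionSubtypeNe_symm_of_ne h, map_sub, optionEquivLeft_X_none,
      optionEquivLeft_X_some]
  rw [show φ.toMulEquiv (X j - X i) = φ (X j - X i) from rfl, this]
  exact Polynomial.prime_X_sub_C _

theorem isRelPrime_X_sub_X [IsDomain R] [LinearOrder σ] {i j k l : σ} (hij : i < j) (hkl : k < l)
    (hne : (i, j) ≠ (k, l)) : IsRelPrime (X j - X i : MvPolynomial σ R) (X l - X k) := by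
  rw [(prime_X_sub_X hij.ne).irreducible.isRelPrime_iff_not_dvd]
  -- evaluating at the indicator of `m` kills `X j - X i` but not `X l - X k`
  obtain ⟨m, hm, hmi, hmj⟩ : ∃ m, (m = k ∨ m = l) ∧ m ≠ i ∧ m ≠ j := by
    by_contra! h
    have hki : k = i := by
      by_contra hki
      have hkj := h k (.inl rfl) hki
      exact hkl.ne (hkj.trans (h l (.inr rfl) (hij.trans (hkj ▸ hkl : j < l)).ne').symm)
    exact hne (by rw [hki, h l (.inr rfl) (hki ▸ hkl.ne')])
  intro hdvd
  classical
  have := map_dvd (eval fun x => if x = m then (1 : R) else 0) hdvd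
  rcases hm with rfl | rfl <;> simp [hmi.symm, hmj.symm, hkl.ne, hkl.ne'] at this

theorem prod_X_sub_X_dvd_of_isAlternating [Fintype σ] [LinearOrder σ] [IsDomain R]
    [UniqueFactorizationMonoid R] [Invertible (2 : R)] {f : MvPolynomial σ R}
    (hf : f.IsAlternating) :
    ∏ pr ∈ univ.filter (fun pr : σ × σ => pr.1 < pr.2), (X pr.2 - X pr.1) ∣ f :=
  prod_dvd_of_isRelPrime
    (fun _ hp _ hq hpq => isRelPrime_X_sub_X (mem_filter.1 hp).2 (mem_filter.1 hq).2 hpq)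
    fun _ hp => X_sub_X_dvd_of_isAlternating hf (mem_filter.1 hp).2.ne

end Divisibility

section Vandermonde

variable [CommRing R] {n : ℕ}

theorem prod_X_sub_X_eq_det_vandermonde :
    ∏ pr ∈ univ.filter (fun pr : Fin n × Fin n => pr.1 < pr.2), (X pr.2 - X pr.1) =
      (vandermonde (X : Fin n → MvPolynomial (Fin n) R)).det := by
  rw [det_vandermonde, ← univ_product_univ, prod_filter, prod_product]
  refine prod_congr rfl fun i _ => ?_
  rw [← prod_filter, filter_lt_eq_Ioi]

theorem isAlternating_prod_X_sub_X :
    (∏ pr ∈ univ.filter (fun pr : Fin n × Fin n => pr.1 < pr.2),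
      (X pr.2 - X pr.1 : MvPolynomial (Fin n) R)).IsAlternating := by
  intro e
  have : (rename e).mapMatrix (vandermonde (X : Fin n → MvPolynomial (Fin n) R)) =
      (vandermonde X).submatrix e id := by
    ext i j
    simp [vandermonde_apply]
  rw [prod_X_sub_X_eq_det_vandermonde, AlgHom.map_det, this, det_permute]

theorem prod_X_sub_X_ne_zero [IsDomain R] :
    ∏ pr ∈ univ.filter (fun pr : Fin n × Fin n => pr.1 < pr.2),
      (X pr.2 - X pr.1 : MvPolynomial (Fin n) R) ≠ 0 := by
  rw [prod_X_sub_X_eq_det_vandermonde, det_vandermonde_ne_zero_iff]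
  exact X_injective

end Vandermonde

end MvPolynomial

/-- The Jacobi symmetrizer applied to any polynomial yields a symmetric
polynomial: the sum over all `w ∈ Sₙ` of `w · (b / ∏_{i<j}(x_j - x_i))`, computed in the
field of rational functions `K(x₁, …, xₙ)`, is (the image of) a symmetric polynomial. -/
theorem jacobi_symmetrizer_is_symmetric_polynomial
    {K : Type*} [Field K] [CharZero K] (n : ℕ) (b : MvPolynomial (Fin n) K) :
    ∃ p : MvPolynomial (Fin n) K, p.IsSymmetric ∧
      ∑ w : Equiv.Perm (Fin n),
          algebraMap (MvPolynomial (Fin n) K) (FractionRing (MvPolynomial (Fin n) K))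
              (rename ⇑w b) /
            algebraMap (MvPolynomial (Fin n) K) (FractionRing (MvPolynomial (Fin n) K))
              (rename ⇑w
                (∏ pr ∈ Finset.univ.filter (fun pr : Fin n × Fin n => pr.1 < pr.2),
                  (X pr.2 - X pr.1))) =
        algebraMap (MvPolynomial (Fin n) K) (FractionRing (MvPolynomial (Fin n) K)) p := by
  obtain ⟨p, hp⟩ := prod_X_sub_X_dvd_of_isAlternating (isAlternating_antisymmetrize b)
  refine ⟨p, isAlternating_prod_X_sub_X.isSymmetric_of_mul prod_X_sub_X_ne_zero
    (hp ▸ isAlternating_antisymmetrize b), ?_⟩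
  rw [sum_div_rename_eq_antisymmetrize_div _ isAlternating_prod_X_sub_X, hp, map_mul,
    mul_div_cancel_left₀ _
      ((map_ne_zero_iff _ (IsFractionRing.injective _ _)).2 prod_X_sub_X_ne_zero)]
end

section
/- The Lagrange–Sylvester symmetrizer produces fully symmetric polynomials: if b ∈ K[x_1,...,x_n] is invariant under S_k × S_{n−k} (permuting x_1,...,x_k and x_{k+1},...,x_n separately), then ∑_{w ∈ S_n/(S_k×S_{n−k})} w·( b / ∏_{i=1}^{k} ∏_{j=k+1}^{n} (x_j − x_i) ), where the sum is over a set of coset representatives, is a well-defined S_n-invariant polynomial in x_1,...,x_n. -/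
/-!
Write `Δ = ∏_{i<j} (xⱼ - xᵢ) = c * G`, where `c` is the product over the pairs `i < k ≤ j`.
Since `w Δ = sign w * Δ`, each term is `w (b / c) = sign w * w (b * G) / Δ`, so the sum over all of
`Sₙ` is `A / Δ` for the antisymmetrization `A` of `b * G`. An alternating polynomial vanishes on
every hyperplane `xᵢ = xⱼ`, so it is divisible by the pairwise non-associated primes `xⱼ - xᵢ`,
hence by `Δ`, and `A / Δ` is symmetric. As `w ↦ w (b / c)` is constant on left cosets of
`S_k × S_{n-k}`, the sum over coset representatives is `A / Δ` divided by `|S_k × S_{n-k}|`.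
-/

open MvPolynomial Finset Equiv.Perm
open scoped Pointwise

theorem Subgroup.IsComplement.sum_eq_card_smul_sum {G M : Type*} [Group G] [Fintype G]
    [AddCommMonoid M] {R : Finset G} {H : Subgroup G} (hR : IsComplement (R : Set G) H)
    {f : G → M} (hf : ∀ g, ∀ h ∈ H, f (g * h) = f g) :
    ∑ g, f g = Nat.card H • ∑ r ∈ R, f r := by
  classical
  calc ∑ g, f g = ∑ x : ↥(R : Set G) × H, f (x.1 * x.2) :=
        (Fintype.sum_bijective _ hR _ _ fun _ => rfl).symm
    _ = ∑ r : ↥(R : Set G), ∑ _h : H, f r :=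
        (Fintype.sum_prod_type _).trans (Fintype.sum_congr _ _ fun r =>
          Fintype.sum_congr _ _ fun h => hf r h h.2)
    _ = Nat.card H • ∑ r ∈ R, f r := by
        rw [Finset.smul_sum, ← Finset.sum_coe_sort R]
        simp [Nat.card_eq_fintype_card]

theorem Subgroup.isComplement_of_existsUnique_inv_mul_mem {G : Type*} [Group G] {R : Finset G}
    {H : Subgroup G} (hR : ∀ g : G, ∃! r, r ∈ R ∧ g⁻¹ * r ∈ H) :
    IsComplement (R : Set G) H := by
  refine isComplement_iff_existsUnique_inv_mul_mem.mpr fun g => ?_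
  obtain ⟨r, ⟨hrR, hr⟩, huniq⟩ := hR g
  refine ⟨⟨r, hrR⟩, by simpa using inv_mem hr, fun s hs => Subtype.ext (huniq s ⟨s.2, ?_⟩)⟩
  simpa using inv_mem hs

namespace MvPolynomial

section Rename
variable {R σ : Type*} [CommRing R]

theorem X_sub_X_dvd_sub_rename_update [DecidableEq σ] (i j : σ) (A : MvPolynomial σ R) :
    X i - X j ∣ A - rename (Function.update id i j) A := by
  set I := Ideal.span {(X i - X j : MvPolynomial σ R)}
  have hcomp : (Ideal.Quotient.mkₐ R I).comp (rename (Function.update id i j)) =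
      Ideal.Quotient.mkₐ R I := by
    refine algHom_ext fun l => ?_
    rcases eq_or_ne l i with rfl | hl
    · simp only [AlgHom.comp_apply, rename_X, Function.update_self, Ideal.Quotient.mkₐ_eq_mk,
        Ideal.Quotient.eq, I, Ideal.mem_span_singleton]
      exact dvd_sub_comm.mpr dvd_rfl
    · simp [hl]
  rw [← Ideal.mem_span_singleton, ← Ideal.Quotient.eq, ← Ideal.Quotient.mkₐ_eq_mk R,
    ← AlgHom.comp_apply, hcomp]

theorem rename_update_X_sub_X [DecidableEq σ] (i j : σ) :
    rename (Function.update id i j) (X i - X j : MvPolynomial σ R) = 0 := by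
  simp [Function.update_apply]

theorem X_sub_X_prime [IsDomain R] {i j : σ} (hij : i ≠ j) :
    Prime (X i - X j : MvPolynomial σ R) := by
  classical
  have hker : Ideal.span {(X i - X j : MvPolynomial σ R)} =
      RingHom.ker (rename (R := R) (Function.update id i j)) := by
    ext A
    rw [Ideal.mem_span_singleton, RingHom.mem_ker]
    constructor
    · rintro ⟨B, rfl⟩
      rw [map_mul, rename_update_X_sub_X, zero_mul]
    · intro hA
      simpa [hA] using X_sub_X_dvd_sub_rename_update i j A
  rw [← Ideal.span_singleton_prime (sub_ne_zero.mpr ((X_injective (R := R)).ne hij)), hker]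
  exact RingHom.ker_isPrime _

theorem X_sub_X_dvd_of_rename_swap_eq_neg [DecidableEq σ] [IsDomain R] [CharZero R] {i j : σ}
    {A : MvPolynomial σ R} (hA : rename (Equiv.swap i j) A = -A) : X i - X j ∣ A := by
  have hcomp : Function.update id i j ∘ Equiv.swap i j = Function.update id i j := by
    funext l
    simp only [Function.comp_apply, Function.update_apply, id, Equiv.swap_apply_def]
    split_ifs <;> simp_all
  have hzero : rename (Function.update id i j) A = 0 := by
    refine self_eq_neg.mp ?_
    rw [← map_neg, ← hA, rename_rename, hcomp]
  simpa [hzero] using X_sub_X_dvd_sub_rename_update i j A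

theorem not_X_sub_X_dvd_X_sub_X [Nontrivial R] [LinearOrder σ] {p q : σ × σ} (hp : p.1 < p.2)
    (hq : q.1 < q.2) (hpq : p ≠ q) : ¬ (X p.2 - X p.1 : MvPolynomial σ R) ∣ X q.2 - X q.1 := by
  rintro ⟨B, hB⟩
  have h := congrArg (rename (Function.update id p.2 p.1)) hB
  rw [map_mul, rename_update_X_sub_X, zero_mul, map_sub, rename_X, rename_X, sub_eq_zero] at h
  have := X_injective h
  obtain ⟨a, b⟩ := p
  obtain ⟨c, d⟩ := q
  simp only [Function.update_apply, id] at this hp hq hpq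
  split_ifs at this <;> grind

end Rename

section Vandermonde
variable {R : Type*} [CommRing R]

variable (R) in
noncomputable def vandermondeProd (n : ℕ) : MvPolynomial (Fin n) R :=
  ∏ pr ∈ univ.filter (fun pr : Fin n × Fin n => pr.1 < pr.2), (X pr.2 - X pr.1)

theorem vandermondeProd_eq_det (n : ℕ) :
    vandermondeProd R n = (Matrix.vandermonde (X : Fin n → MvPolynomial (Fin n) R)).det := by
  rw [Matrix.det_vandermonde, vandermondeProd, prod_filter, Fintype.prod_prod_type]
  refine prod_congr rfl fun i _ => ?_
  rw [← prod_filter]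
  congr 1
  ext j
  simp

theorem rename_vandermondeProd {n : ℕ} (σ : Equiv.Perm (Fin n)) :
    rename σ (vandermondeProd R n) = (sign σ : MvPolynomial (Fin n) R) * vandermondeProd R n := by
  have hmap : (Matrix.vandermonde X).map (rename (R := R) σ) =
      (Matrix.vandermonde (X : Fin n → MvPolynomial (Fin n) R)).submatrix σ id := by
    ext i j
    simp [Matrix.vandermonde]
  rw [vandermondeProd_eq_det, ← AlgHom.coe_toRingHom, RingHom.map_det, RingHom.mapMatrix_apply,
    AlgHom.coe_toRingHom, hmap, Matrix.det_permute]

theorem vandermondeProd_ne_zero [IsDomain R] (n : ℕ) : vandermondeProd R n ≠ 0 := by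
  rw [vandermondeProd_eq_det, Matrix.det_vandermonde_ne_zero_iff]
  exact X_injective

theorem vandermondeProd_dvd_of_rename_eq_sign_mul {K : Type*} [Field K] [CharZero K] {n : ℕ}
    {A : MvPolynomial (Fin n) K}
    (hA : ∀ σ : Equiv.Perm (Fin n), rename σ A = sign σ * A) : vandermondeProd K n ∣ A := by
  refine prod_dvd_of_isRelPrime (fun p hp q hq hpq => ?_) fun p hp => ?_
  · simp only [coe_filter, mem_univ, true_and, Set.mem_ofPred_eq] at hp hq
    exact ((X_sub_X_prime hp.ne').irreducible.isRelPrime_iff_not_dvd).mpr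
      (not_X_sub_X_dvd_X_sub_X hp hq hpq)
  · simp only [mem_filter, mem_univ, true_and] at hp
    refine X_sub_X_dvd_of_rename_swap_eq_neg ?_
    rw [hA, sign_swap hp.ne']
    simp

variable {α : Type*} [Fintype α] [DecidableEq α]

noncomputable def antisymmetrization (B : MvPolynomial α R) : MvPolynomial α R :=
  ∑ w : Equiv.Perm α, (sign w : MvPolynomial α R) * rename w B

theorem rename_antisymmetrization (σ : Equiv.Perm α) (B : MvPolynomial α R) :
    rename σ (antisymmetrization B) = sign σ * antisymmetrization B := by
  rw [antisymmetrization, map_sum, mul_sum]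
  refine Fintype.sum_equiv (Equiv.mulLeft σ) _ _ fun w => ?_
  have hsign : sign w = sign σ * sign (σ * w) := by
    rw [Equiv.Perm.sign_mul, ← mul_assoc, Int.units_mul_self, one_mul]
  rw [map_mul, map_intCast, rename_rename, hsign, Units.val_mul, Int.cast_mul, mul_assoc]
  rfl

theorem IsSymmetric.of_rename_vandermondeProd_mul [IsDomain R] {n : ℕ}
    {q : MvPolynomial (Fin n) R}
    (h : ∀ σ : Equiv.Perm (Fin n), rename σ (vandermondeProd R n * q) =
      sign σ * (vandermondeProd R n * q)) : q.IsSymmetric := by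
  intro σ
  have hσ := h σ
  rw [map_mul, rename_vandermondeProd, mul_assoc] at hσ
  exact mul_left_cancel₀ (vandermondeProd_ne_zero n)
    (((sign σ).isUnit.map (Int.castRingHom _)).mul_left_cancel hσ)

end Vandermonde

section CrossProd
variable {R : Type*} [CommRing R]

def youngSubgroup (n k : ℕ) : Subgroup (Equiv.Perm (Fin n)) :=
  MulAction.stabilizer (Equiv.Perm (Fin n)) {i : Fin n | (i : ℕ) < k}

theorem mem_youngSubgroup {n k : ℕ} {h : Equiv.Perm (Fin n)} :
    h ∈ youngSubgroup n k ↔ ∀ i : Fin n, ((h i : ℕ) < k ↔ (i : ℕ) < k) := by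
  simp only [youngSubgroup, MulAction.mem_stabilizer_set, Equiv.Perm.smul_def, Set.mem_ofPred_eq]

variable (R) in
noncomputable def crossProd (n k : ℕ) : MvPolynomial (Fin n) R :=
  ∏ pr ∈ univ.filter (fun pr : Fin n × Fin n => (pr.1 : ℕ) < k ∧ k ≤ (pr.2 : ℕ)),
    (X pr.2 - X pr.1)

theorem crossProd_dvd_vandermondeProd (n k : ℕ) : crossProd R n k ∣ vandermondeProd R n := by
  refine prod_dvd_prod_of_subset _ _ _ fun pr => ?_
  simp only [mem_filter, mem_univ, true_and, Fin.lt_def]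
  omega

theorem rename_crossProd {n k : ℕ} {h : Equiv.Perm (Fin n)} (hh : h ∈ youngSubgroup n k) :
    rename h (crossProd R n k) = crossProd R n k := by
  rw [mem_youngSubgroup] at hh
  rw [crossProd, map_prod]
  refine prod_equiv (h.prodCongr h) (fun pr => ?_) fun pr _ => ?_
  · simp only [mem_filter, mem_univ, true_and, Equiv.prodCongr_apply, Prod.map, hh, ← not_lt]
  · simp

end CrossProd

section FractionRing
variable {R : Type*} [CommRing R] [IsDomain R] {n : ℕ}

theorem algebraMap_rename_div_rename_of_mul_eq_vandermondeProd {b c G : MvPolynomial (Fin n) R}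
    (hcG : c * G = vandermondeProd R n) (w : Equiv.Perm (Fin n)) :
    algebraMap _ (FractionRing (MvPolynomial (Fin n) R)) (rename w b) /
        algebraMap _ _ (rename w c) =
      algebraMap _ _ (sign w * rename w (b * G)) / algebraMap _ _ (vandermondeProd R n) := by
  set ι := algebraMap (MvPolynomial (Fin n) R) (FractionRing (MvPolynomial (Fin n) R))
  have hι : Function.Injective ι := IsFractionRing.injective _ _
  have hΔ : ι (vandermondeProd R n) ≠ 0 :=
    (map_ne_zero_iff ι hι).mpr (vandermondeProd_ne_zero n)
  have hG : ι (rename w G) ≠ 0 :=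
    (map_ne_zero_iff ι hι).mpr <| (map_ne_zero_iff _ (rename_injective _ w.injective)).mpr <|
      right_ne_zero_of_mul (hcG ▸ vandermondeProd_ne_zero n)
  have hcGw : ι (rename w c) * ι (rename w G) = sign w * ι (vandermondeProd R n) := by
    rw [← map_mul, ← map_mul, hcG, rename_vandermondeProd, map_mul, map_intCast]
  have hsign : (sign w : FractionRing (MvPolynomial (Fin n) R))⁻¹ = sign w := by
    refine inv_eq_of_mul_eq_one_right ?_
    rw [← Int.cast_mul, ← Units.val_mul, Int.units_mul_self, Units.val_one, Int.cast_one]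
  rw [← mul_div_mul_right _ _ hG, hcGw, map_mul (rename w), map_mul ι, map_mul ι, map_intCast,
    ← div_div]
  congr 1
  rw [div_eq_mul_inv, hsign, mul_comm]

theorem sum_algebraMap_rename_div_rename_eq_of_antisymmetrization_eq
    {b c G q : MvPolynomial (Fin n) R} (hcG : c * G = vandermondeProd R n)
    (hq : antisymmetrization (b * G) = vandermondeProd R n * q) :
    ∑ w : Equiv.Perm (Fin n), algebraMap _ (FractionRing (MvPolynomial (Fin n) R)) (rename w b) /
        algebraMap _ _ (rename w c) = algebraMap _ _ q := by
  have hΔ : algebraMap _ (FractionRing (MvPolynomial (Fin n) R)) (vandermondeProd R n) ≠ 0 :=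
    (map_ne_zero_iff _ (IsFractionRing.injective _ _)).mpr (vandermondeProd_ne_zero n)
  simp only [algebraMap_rename_div_rename_of_mul_eq_vandermondeProd hcG, ← sum_div, ← map_sum]
  rw [← antisymmetrization, hq, map_mul, mul_div_cancel_left₀ _ hΔ]

end FractionRing

end MvPolynomial

theorem lagrange_sylvester_symmetrizer_is_symmetric_polynomial_general
    {K : Type*} [Field K] [CharZero K] (n k : ℕ)
    (b : MvPolynomial (Fin n) K)
    (hb : ∀ h : Equiv.Perm (Fin n),
      (∀ i : Fin n, ((h i : ℕ) < k ↔ (i : ℕ) < k)) → rename ⇑h b = b) :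
    ∃ p : MvPolynomial (Fin n) K, p.IsSymmetric ∧
      ∀ R : Finset (Equiv.Perm (Fin n)),
        (∀ w : Equiv.Perm (Fin n), ∃! r : Equiv.Perm (Fin n),
          r ∈ R ∧ ∀ i : Fin n, (((w⁻¹ * r) i : ℕ) < k ↔ (i : ℕ) < k)) →
        ∑ w ∈ R,
            algebraMap (MvPolynomial (Fin n) K) (FractionRing (MvPolynomial (Fin n) K))
                (rename ⇑w b) /
              algebraMap (MvPolynomial (Fin n) K) (FractionRing (MvPolynomial (Fin n) K))
                (rename ⇑w
                  (∏ pr ∈ Finset.univ.filter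
                      (fun pr : Fin n × Fin n => (pr.1 : ℕ) < k ∧ k ≤ (pr.2 : ℕ)),
                    (X pr.2 - X pr.1))) =
          algebraMap (MvPolynomial (Fin n) K) (FractionRing (MvPolynomial (Fin n) K)) p := by
  obtain ⟨G, hG⟩ := crossProd_dvd_vandermondeProd (R := K) n k
  obtain ⟨q, hq⟩ := vandermondeProd_dvd_of_rename_eq_sign_mul (rename_antisymmetrization · (b * G))
  set m := Nat.card (youngSubgroup n k)
  refine ⟨(m : K)⁻¹ • q, .smul _ (.of_rename_vandermondeProd_mul
    (hq ▸ rename_antisymmetrization · (b * G))), fun R hR => ?_⟩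
  have hcompl : Subgroup.IsComplement (R : Set (Equiv.Perm (Fin n))) (youngSubgroup n k) :=
    Subgroup.isComplement_of_existsUnique_inv_mul_mem <| by
      simpa only [← mem_youngSubgroup] using hR
  have hsum := hcompl.sum_eq_card_smul_sum (f := fun w =>
      algebraMap _ (FractionRing (MvPolynomial (Fin n) K)) (rename w b) /
        algebraMap _ _ (rename w (crossProd K n k))) fun w h hh => by
    simp only [Equiv.Perm.coe_mul, ← rename_rename, hb h (mem_youngSubgroup.mp hh),
      rename_crossProd hh]
  rw [sum_algebraMap_rename_div_rename_eq_of_antisymmetrization_eq hG.symm hq] at hsum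
  rw [Algebra.smul_def, map_mul, ← IsScalarTower.algebraMap_apply, map_inv₀, map_natCast, hsum,
    nsmul_eq_mul, inv_mul_cancel_left₀ (Nat.cast_ne_zero.mpr Nat.card_pos.ne')]
  rfl

/-- The Lagrange–Sylvester symmetrizer produces fully symmetric polynomials.
If `b ∈ K[x₁,…,xₙ]` is invariant under `H = S_k × S_{n-k}` (permutations preserving the
blocks `{i : i < k}` and `{i : k ≤ i}`), then there is a symmetric polynomial `p` such
that for every set `R` of representatives of the left cosets `Sₙ/(S_k × S_{n-k})`
(each coset contains exactly one element of `R`),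
`∑_{w ∈ R} w·( b / ∏_{i<k≤j}(xⱼ - xᵢ) ) = p` in `K(x₁,…,xₙ)`;
in particular the sum is a well-defined `Sₙ`-invariant polynomial. -/
theorem lagrange_sylvester_symmetrizer_is_symmetric_polynomial
    {K : Type*} [Field K] [CharZero K] (n k : ℕ) (hk : k ≤ n)
    (b : MvPolynomial (Fin n) K)
    (hb : ∀ h : Equiv.Perm (Fin n),
      (∀ i : Fin n, ((h i : ℕ) < k ↔ (i : ℕ) < k)) → rename ⇑h b = b) :
    ∃ p : MvPolynomial (Fin n) K, p.IsSymmetric ∧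
      ∀ R : Finset (Equiv.Perm (Fin n)),
        (∀ w : Equiv.Perm (Fin n), ∃! r : Equiv.Perm (Fin n),
          r ∈ R ∧ ∀ i : Fin n, (((w⁻¹ * r) i : ℕ) < k ↔ (i : ℕ) < k)) →
        ∑ w ∈ R,
            algebraMap (MvPolynomial (Fin n) K) (FractionRing (MvPolynomial (Fin n) K))
                (rename ⇑w b) /
              algebraMap (MvPolynomial (Fin n) K) (FractionRing (MvPolynomial (Fin n) K))
                (rename ⇑w
                  (∏ pr ∈ Finset.univ.filter
                      (fun pr : Fin n × Fin n => (pr.1 : ℕ) < k ∧ k ≤ (pr.2 : ℕ)),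
                    (X pr.2 - X pr.1))) =
          algebraMap (MvPolynomial (Fin n) K) (FractionRing (MvPolynomial (Fin n) K)) p :=
  lagrange_sylvester_symmetrizer_is_symmetric_polynomial_general n k b hb
end

section
/- For 1 ≤ k ≤ n−1, the symmetrization over cosets ∑_{w ∈ S_n/(S_k×S_{n−k})} w·( 1 / ∏_{i=1}^{k}∏_{j=k+1}^{n}(x_i − x_j) ), summed over coset representatives (the Lagrange–Sylvester symmetrizer of the constant polynomial 1), equals 0, since k(n−k) ≥ 1. -/
open MvPolynomial

namespace LSAux

open Equiv Finset

variable {K : Type*} [Field K] [CharZero K] {n : ℕ}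

/-- The sign of a permutation, as an element of the polynomial ring. -/
noncomputable def sgn (w : Perm (Fin n)) : MvPolynomial (Fin n) K :=
  ((Perm.sign w : ℤ) : MvPolynomial (Fin n) K)

lemma sgn_mul (a b : Perm (Fin n)) : (sgn (a * b) : MvPolynomial (Fin n) K) = sgn a * sgn b := by
  simp only [sgn, map_mul, Units.val_mul, Int.cast_mul]

lemma sgn_sq (a : Perm (Fin n)) : (sgn a : MvPolynomial (Fin n) K) * sgn a = 1 := by
  simp only [sgn, ← Int.cast_mul, ← Units.val_mul]
  rw [Int.units_mul_self]
  simp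

/-- The "Vandermonde" polynomial: product of `X i - X j` over ordered pairs `i < j`. -/
noncomputable def Vv (K : Type*) [Field K] (n : ℕ) : MvPolynomial (Fin n) K :=
  ∏ pr ∈ Finset.univ.filter (fun pr : Fin n × Fin n => pr.1 < pr.2), (X pr.1 - X pr.2)

lemma prod_pairs {M : Type*} [CommMonoid M] (f : Fin n → Fin n → M) :
    ∏ pr ∈ Finset.univ.filter (fun pr : Fin n × Fin n => pr.1 < pr.2), f pr.1 pr.2
      = ∏ i : Fin n, ∏ j ∈ Finset.Ioi i, f i j := by
  rw [Finset.prod_sigma' Finset.univ (fun i => Finset.Ioi i) (fun i j => f i j)]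
  refine Finset.prod_nbij' (fun pr : Fin n × Fin n => (⟨pr.1, pr.2⟩ : Σ _ : Fin n, Fin n))
    (fun x => (x.1, x.2)) ?_ ?_ ?_ ?_ ?_
  · intro a ha
    simp only [Finset.mem_filter, Finset.mem_univ, true_and] at ha
    simp [Finset.mem_sigma, Finset.mem_Ioi, ha]
  · intro a ha
    simp only [Finset.mem_sigma, Finset.mem_univ, Finset.mem_Ioi, true_and] at ha
    simp [ha]
  · intro a _; rfl
  · intro a _; rfl
  · intro a ha
    simp only [Finset.mem_filter, Finset.mem_univ, true_and] at ha
    rfl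

lemma eval_ne (i j : Fin n) (h : i ≠ j) : (X i - X j : MvPolynomial (Fin n) K) ≠ 0 := by
  intro h0
  have := congrArg (eval (fun t : Fin n => if t = i then (1 : K) else 0)) h0
  simp only [map_sub, eval_X, if_pos rfl, if_neg (by simpa using h.symm), map_zero, sub_zero] at this
  exact one_ne_zero this

lemma Vv_ne_zero : (Vv K n) ≠ 0 := by
  rw [Vv, Finset.prod_ne_zero_iff]
  intro pr hpr
  simp only [Finset.mem_filter, Finset.mem_univ, true_and] at hpr
  exact eval_ne _ _ (ne_of_lt hpr)

lemma rename_Vv (w : Perm (Fin n)) :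
    rename (⇑w) (Vv K n) = sgn w * Vv K n := by
  classical
  set N := (Finset.univ.filter (fun pr : Fin n × Fin n => pr.1 < pr.2)).card with hN
  have hvd : ∀ v : Fin n → MvPolynomial (Fin n) K,
      Matrix.det (Matrix.vandermonde v)
        = ∏ pr ∈ Finset.univ.filter (fun pr : Fin n × Fin n => pr.1 < pr.2),
            (v pr.2 - v pr.1) := by
    intro v
    rw [Matrix.det_vandermonde, prod_pairs (fun i j => v j - v i)]
  have hVd : Matrix.det (Matrix.vandermonde (fun i => (X i : MvPolynomial (Fin n) K)))
      = (-1 : MvPolynomial (Fin n) K) ^ N * Vv K n := by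
    rw [hvd, Vv, ← Finset.prod_const, ← Finset.prod_mul_distrib]
    exact Finset.prod_congr rfl (fun pr _ => by ring)
  have hmap : (Matrix.vandermonde (fun i => (X i : MvPolynomial (Fin n) K))).map
        (rename (⇑w) : MvPolynomial (Fin n) K →ₐ[K] MvPolynomial (Fin n) K)
      = Matrix.vandermonde (fun i => (X (w i) : MvPolynomial (Fin n) K)) := by
    ext i j
    simp [Matrix.vandermonde_apply]
  have hperm : Matrix.det (Matrix.vandermonde (fun i => (X (w i) : MvPolynomial (Fin n) K)))
      = sgn w * Matrix.det (Matrix.vandermonde (fun i => (X i : MvPolynomial (Fin n) K))) := by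
    have : Matrix.vandermonde (fun i => (X (w i) : MvPolynomial (Fin n) K))
        = (Matrix.vandermonde (fun i => (X i : MvPolynomial (Fin n) K))).submatrix (⇑w) id := by
      ext i j; rfl
    rw [this, Matrix.det_permute]
    rfl
  have key : rename (⇑w) (Matrix.det (Matrix.vandermonde (fun i => (X i : MvPolynomial (Fin n) K))))
      = sgn w * Matrix.det (Matrix.vandermonde (fun i => (X i : MvPolynomial (Fin n) K))) := by
    rw [AlgHom.map_det (rename (⇑w) : MvPolynomial (Fin n) K →ₐ[K] MvPolynomial (Fin n) K)]
    rw [show (rename (⇑w) : MvPolynomial (Fin n) K →ₐ[K] MvPolynomial (Fin n) K).mapMatrix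
        (Matrix.vandermonde fun i => (X i : MvPolynomial (Fin n) K))
        = (Matrix.vandermonde (fun i => (X i : MvPolynomial (Fin n) K))).map
            (rename (⇑w) : MvPolynomial (Fin n) K →ₐ[K] MvPolynomial (Fin n) K) from rfl,
      hmap, hperm]
  rw [hVd] at key
  rw [map_mul, map_pow, map_neg, map_one] at key
  have hne : ((-1 : MvPolynomial (Fin n) K) ^ N) ≠ 0 := by
    apply pow_ne_zero; exact neg_ne_zero.mpr one_ne_zero
  apply mul_left_cancel₀ hne
  rw [key]; ring

lemma strictMono_le {c : ℕ} {f : Fin c → ℕ} (hf : StrictMono f) :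
    ∀ v (hv : v < c), v ≤ f ⟨v, hv⟩ := by
  intro v
  induction v with
  | zero => intro hv; exact Nat.zero_le _
  | succ m ih =>
    intro hv
    have hm : m < c := Nat.lt_of_succ_lt hv
    have h1 := ih hm
    have h2 : f ⟨m, hm⟩ < f ⟨m + 1, hv⟩ := hf (by simp [Fin.lt_def])
    omega

lemma sum_range_le (s : Finset ℕ) : ∑ i ∈ Finset.range s.card, i ≤ ∑ x ∈ s, x := by
  classical
  set c := s.card with hc
  have e := s.orderIsoOfFin hc.symm
  have hmono : StrictMono (fun i : Fin c => ((e i : ℕ))) := by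
    intro a b hab
    exact e.strictMono hab
  have h1 : ∑ i ∈ Finset.range c, i = ∑ i : Fin c, (i : ℕ) :=
    (Fin.sum_univ_eq_sum_range (fun i => i) c).symm
  have h2 : ∑ x ∈ s, x = ∑ i : Fin c, ((e i : ℕ)) := by
    rw [← Finset.sum_coe_sort s (fun x => (x : ℕ))]
    exact (Equiv.sum_comp e.toEquiv (fun x : s => (x : ℕ))).symm
  rw [h1, h2]
  apply Finset.sum_le_sum
  intro i _
  exact strictMono_le hmono i.1 i.2

lemma not_injective_of_small {α : Fin n →₀ ℕ}
    (h : (∑ i : Fin n, α i) < ∑ i ∈ Finset.range n, i) :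
    ¬ Function.Injective (⇑α : Fin n → ℕ) := by
  intro hinj
  have himg : (Finset.univ.image (⇑α)).card = n := by
    rw [Finset.card_image_of_injective _ hinj, Finset.card_univ, Fintype.card_fin]
  have h1 : ∑ i ∈ Finset.range n, i ≤ ∑ x ∈ Finset.univ.image (⇑α), x := by
    have := sum_range_le (Finset.univ.image (⇑α))
    rwa [himg] at this
  have h2 : ∑ x ∈ Finset.univ.image (⇑α), x = ∑ i : Fin n, α i :=
    Finset.sum_image (fun a _ b _ hab => hinj hab)
  omega

lemma alt_sum_monomial_zero (α : Fin n →₀ ℕ) (c : K) {i j : Fin n} (hij : i ≠ j)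
    (hα : α i = α j) :
    ∑ w : Perm (Fin n), (sgn w : MvPolynomial (Fin n) K) * rename (⇑w) (monomial α c) = 0 := by
  classical
  set τ := Equiv.swap i j with hτ
  set S := ∑ w : Perm (Fin n), (sgn w : MvPolynomial (Fin n) K) * rename (⇑w) (monomial α c)
    with hS
  have hren : rename (⇑τ) (monomial α c) = monomial α c := by
    rw [rename_monomial]
    have hd : Finsupp.mapDomain (⇑τ) α = α := by
      rw [← Finsupp.equivMapDomain_eq_mapDomain]
      ext a
      rw [Finsupp.equivMapDomain_apply]
      have hsymm : τ.symm = τ := by rw [hτ]; exact Equiv.symm_swap i j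
      rw [hsymm]
      rcases eq_or_ne a i with rfl | hai
      · rw [hτ, Equiv.swap_apply_left, hα]
      · rcases eq_or_ne a j with rfl | haj
        · rw [hτ, Equiv.swap_apply_right, hα]
        · rw [hτ, Equiv.swap_apply_of_ne_of_ne hai haj]
    rw [hd]
  have hstep : ∀ w : Perm (Fin n),
      (sgn (w * τ) : MvPolynomial (Fin n) K) * rename (⇑(w * τ)) (monomial α c)
        = -((sgn w : MvPolynomial (Fin n) K) * rename (⇑w) (monomial α c)) := by
    intro w
    have h1 : rename (⇑(w * τ)) (monomial α c) = rename (⇑w) (monomial α c) := by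
      rw [show (⇑(w * τ) : Fin n → Fin n) = ⇑w ∘ ⇑τ from rfl, ← rename_rename, hren]
    have h2 : (sgn (w * τ) : MvPolynomial (Fin n) K) = -(sgn w) := by
      rw [sgn_mul]
      have : (sgn τ : MvPolynomial (Fin n) K) = -1 := by
        rw [sgn, hτ, Perm.sign_swap hij]; simp
      rw [this]; ring
    rw [h1, h2]; ring
  have hSneg : S = -S := by
    calc S = ∑ w : Perm (Fin n),
        (sgn (w * τ) : MvPolynomial (Fin n) K) * rename (⇑(w * τ)) (monomial α c) := by
          rw [hS]
          exact (Equiv.sum_comp (Equiv.mulRight τ)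
            (fun w => (sgn w : MvPolynomial (Fin n) K) * rename (⇑w) (monomial α c))).symm
      _ = ∑ w : Perm (Fin n), -((sgn w : MvPolynomial (Fin n) K) * rename (⇑w) (monomial α c)) :=
          Finset.sum_congr rfl (fun w _ => hstep w)
      _ = -S := by rw [hS, Finset.sum_neg_distrib]
  have h2S : S + S = 0 := by linear_combination hSneg
  have : (2 : MvPolynomial (Fin n) K) * S = 0 := by rw [two_mul]; exact h2S
  rcases mul_eq_zero.mp this with h | h
  · exact absurd h two_ne_zero
  · exact h

lemma alt_sum_eq_zero (p : MvPolynomial (Fin n) K)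
    (hdeg : p.totalDegree < ∑ i ∈ Finset.range n, i) :
    ∑ w : Perm (Fin n), (sgn w : MvPolynomial (Fin n) K) * rename (⇑w) p = 0 := by
  classical
  have hp : ∀ w : Perm (Fin n), (sgn w : MvPolynomial (Fin n) K) * rename (⇑w) p
      = ∑ α ∈ p.support, (sgn w : MvPolynomial (Fin n) K) * rename (⇑w) (monomial α (coeff α p)) := by
    intro w
    conv_lhs => rw [p.as_sum]
    rw [map_sum, Finset.mul_sum]
  rw [Finset.sum_congr rfl (fun w _ => hp w), Finset.sum_comm]
  apply Finset.sum_eq_zero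
  intro α hα
  have hsum : (∑ i : Fin n, α i) < ∑ i ∈ Finset.range n, i := by
    have h1 : α.sum (fun _ e => e) ≤ p.totalDegree := le_totalDegree hα
    have h2 : α.sum (fun _ e => e) = ∑ i : Fin n, α i := by
      rw [Finsupp.sum_fintype]
      intro _; rfl
    omega
  have hninj := not_injective_of_small hsum
  rw [Function.not_injective_iff] at hninj
  obtain ⟨i, j, hij, hne⟩ := hninj
  exact alt_sum_monomial_zero α (coeff α p) hne hij

end LSAux

/-- The Lagrange–Sylvester symmetrizer of the constant polynomial `1`
vanishes whenever `1 ≤ k ≤ n − 1` (so that `k(n−k) ≥ 1`): for any set `R` of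
representatives of the left cosets `Sₙ/(S_k × S_{n−k})`,
`∑_{w ∈ R} w·( 1 / ∏_{i<k≤j}(xᵢ − xⱼ) ) = 0` in `K(x₁, …, xₙ)`. -/
theorem lagrange_sylvester_symmetrizer_of_one_eq_zero
    {K : Type*} [Field K] [CharZero K] (n k : ℕ) (hk1 : 1 ≤ k) (hk2 : k ≤ n - 1)
    (R : Finset (Equiv.Perm (Fin n)))
    (hR : ∀ w : Equiv.Perm (Fin n), ∃! r : Equiv.Perm (Fin n),
      r ∈ R ∧ ∀ i : Fin n, (((w⁻¹ * r) i : ℕ) < k ↔ (i : ℕ) < k)) :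
    ∑ w ∈ R,
        (1 : FractionRing (MvPolynomial (Fin n) K)) /
          algebraMap (MvPolynomial (Fin n) K) (FractionRing (MvPolynomial (Fin n) K))
            (rename ⇑w
              (∏ pr ∈ Finset.univ.filter
                  (fun pr : Fin n × Fin n => (pr.1 : ℕ) < k ∧ k ≤ (pr.2 : ℕ)),
                (X pr.1 - X pr.2))) = 0 := by
  classical
  open Equiv LSAux in
  have hn2 : 2 ≤ n := by omega
  have hkn : k < n := by omega
  set P := MvPolynomial (Fin n) K with hP
  set F := FractionRing P with hF
  set σA := algebraMap P F with hσA
  set cut : Fin n × Fin n → Prop := fun pr => (pr.1 : ℕ) < k ∧ k ≤ (pr.2 : ℕ) with hcut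
  set D : P := ∏ pr ∈ Finset.univ.filter cut, (X pr.1 - X pr.2) with hD
  set Δ : P := ∏ pr ∈ Finset.univ.filter (fun pr : Fin n × Fin n => pr.1 < pr.2 ∧ ¬ cut pr),
      (X pr.1 - X pr.2) with hΔ
  have hcutlt : ∀ pr : Fin n × Fin n, cut pr → pr.1 < pr.2 := by
    intro pr hpr
    rw [Fin.lt_def]
    omega
  -- D * Δ = Vv
  have hDV : D * Δ = Vv K n := by
    rw [hD, hΔ, Vv,
      ← Finset.prod_filter_mul_prod_filter_not
        (Finset.univ.filter fun pr : Fin n × Fin n => pr.1 < pr.2) cut]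
    congr 1
    · congr 1
      ext pr
      simp only [Finset.mem_filter, Finset.mem_univ, true_and, hcut, Fin.lt_def]
      omega
    · rw [Finset.filter_filter]
  have hD0 : D ≠ 0 := by
    rw [hD, Finset.prod_ne_zero_iff]
    intro pr hpr
    simp only [Finset.mem_filter, Finset.mem_univ, true_and] at hpr
    exact eval_ne _ _ (ne_of_lt (hcutlt pr hpr))
  -- Hpred and its properties
    -- within-block permutations fix D and scale Δ by the sign
  set Hpred : Perm (Fin n) → Prop := fun h => ∀ i : Fin n, ((h i : ℕ) < k ↔ (i : ℕ) < k)
    with hHpred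
  have hrenD : ∀ h : Perm (Fin n), Hpred h → rename (⇑h) D = D := by
    intro h hh
    rw [hD, map_prod]
    simp only [map_sub, rename_X]
    refine Finset.prod_nbij' (fun pr : Fin n × Fin n => (h pr.1, h pr.2))
      (fun pr : Fin n × Fin n => (h⁻¹ pr.1, h⁻¹ pr.2)) ?_ ?_ ?_ ?_ ?_
    · intro pr hpr
      simp only [Finset.mem_filter, Finset.mem_univ, true_and, hcut] at hpr ⊢
      constructor
      · exact (hh pr.1).mpr hpr.1
      · have := hh pr.2
        omega
    · intro pr hpr
      simp only [Finset.mem_filter, Finset.mem_univ, true_and, hcut] at hpr ⊢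
      have h1 := hh (h⁻¹ pr.1)
      have h2 := hh (h⁻¹ pr.2)
      rw [show ∀ x, h (h⁻¹ x) = x from fun x => h.apply_symm_apply x] at h1 h2
      omega
    · intro pr _
      simp
    · intro pr _
      simp
    · intro pr _
      rfl
  have hrenΔ : ∀ h : Perm (Fin n), Hpred h → rename (⇑h) Δ = sgn h * Δ := by
    intro h hh
    apply mul_left_cancel₀ hD0
    have : rename (⇑h) D * rename (⇑h) Δ = rename (⇑h) (Vv K n) := by
      rw [← map_mul, hDV]
    rw [hrenD h hh] at this
    rw [this, rename_Vv, ← hDV]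
    ring
  -- the coset-constant function G
  set G : Perm (Fin n) → P := fun w => sgn w * rename (⇑w) Δ with hG
  have hGH : ∀ (r h : Perm (Fin n)), Hpred h → G (r * h) = G r := by
    intro r h hh
    rw [hG]
    simp only
    rw [sgn_mul, show (⇑(r * h) : Fin n → Fin n) = ⇑r ∘ ⇑h from rfl, ← rename_rename,
      hrenΔ h hh, map_mul]
    have hc : rename (⇑r) (sgn h : P) = (sgn h : P) := by
      rw [sgn]
      exact map_intCast _ _
    rw [hc]
    calc sgn r * sgn h * (sgn h * rename (⇑r) Δ) = sgn r * (sgn h * sgn h) * rename (⇑r) Δ := by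
          ring
      _ = sgn r * rename (⇑r) Δ := by rw [sgn_sq]; ring
  -- representatives
  set rep : Perm (Fin n) → Perm (Fin n) := fun w => (hR w).choose with hrep
  have hrep1 : ∀ w, rep w ∈ R := fun w => (hR w).choose_spec.1.1
  have hrep2 : ∀ w, Hpred (w⁻¹ * rep w) := fun w => (hR w).choose_spec.1.2
  have huniq : ∀ w r : Perm (Fin n), r ∈ R → Hpred (w⁻¹ * r) → rep w = r := by
    intro w r h1 h2
    exact ((hR w).choose_spec.2 r ⟨h1, h2⟩).symm
  have hGconst : ∀ w, G w = G (rep w) := by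
    intro w
    have : rep w = w * (w⁻¹ * rep w) := by group
    rw [this, hGH w _ (hrep2 w)]
  -- fibers of rep
  set Hf : Finset (Perm (Fin n)) := Finset.univ.filter Hpred with hHf
  have hH1 : (1 : Perm (Fin n)) ∈ Hf := by
    simp [hHf, hHpred]
  have hcard : ∀ r ∈ R, (Finset.univ.filter fun w => rep w = r).card = Hf.card := by
    intro r hr
    refine Finset.card_nbij' (fun w => w⁻¹ * r) (fun h => r * h⁻¹) ?_ ?_ ?_ ?_
    · intro w hw
      simp only [Finset.mem_coe, Finset.mem_filter, Finset.mem_univ, true_and] at hw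
      rw [hHf, Finset.mem_coe, Finset.mem_filter]
      refine ⟨Finset.mem_univ _, ?_⟩
      rw [← hw]
      exact hrep2 w
    · intro h hh
      rw [hHf, Finset.mem_coe, Finset.mem_filter] at hh
      simp only [Finset.mem_coe, Finset.mem_filter, Finset.mem_univ, true_and]
      apply huniq _ _ hr
      have : (r * h⁻¹)⁻¹ * r = h := by group
      rw [this]
      exact hh.2
    · intro w _
      group
    · intro h _
      group
  -- sum over all permutations
  have hfib : ∑ r ∈ R, ∑ w ∈ Finset.univ.filter (fun w => rep w = r), G w
      = ∑ w : Perm (Fin n), G w :=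
    Finset.sum_fiberwise_of_maps_to (fun w _ => hrep1 w) G
  have hinner : ∀ r ∈ R, ∑ w ∈ Finset.univ.filter (fun w => rep w = r), G w
      = Hf.card • G r := by
    intro r hr
    rw [Finset.sum_congr rfl (fun w hw => by
      rw [hGconst w, (Finset.mem_filter.mp hw).2]), Finset.sum_const, hcard r hr]
  -- degree bound for Δ
  have hXdeg : ∀ pr : Fin n × Fin n, ((X pr.1 - X pr.2 : P)).totalDegree ≤ 1 := by
    intro pr
    refine (totalDegree_sub _ _).trans ?_
    simp [totalDegree_X]
  have hdeg1 : Δ.totalDegree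
      ≤ (Finset.univ.filter fun pr : Fin n × Fin n => pr.1 < pr.2 ∧ ¬ cut pr).card := by
    rw [hΔ]
    refine (totalDegree_finset_prod _ _).trans ?_
    calc ∑ pr ∈ Finset.univ.filter (fun pr : Fin n × Fin n => pr.1 < pr.2 ∧ ¬ cut pr),
          ((X pr.1 - X pr.2 : P)).totalDegree
        ≤ ∑ _pr ∈ Finset.univ.filter (fun pr : Fin n × Fin n => pr.1 < pr.2 ∧ ¬ cut pr), 1 :=
          Finset.sum_le_sum (fun pr _ => hXdeg pr)
      _ = _ := by rw [Finset.sum_const, smul_eq_mul, mul_one]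
  have hcardlt : (Finset.univ.filter fun pr : Fin n × Fin n => pr.1 < pr.2 ∧ ¬ cut pr).card
      < (Finset.univ.filter fun pr : Fin n × Fin n => pr.1 < pr.2).card := by
    have hsplit := Finset.card_filter_add_card_filter_not
      (s := Finset.univ.filter fun pr : Fin n × Fin n => pr.1 < pr.2) (p := cut)
    rw [Finset.filter_filter, Finset.filter_filter] at hsplit
    have hpos : 0 < (Finset.univ.filter
        fun pr : Fin n × Fin n => pr.1 < pr.2 ∧ cut pr).card := by
      rw [Finset.card_pos]
      refine ⟨(⟨0, by omega⟩, ⟨k, hkn⟩), ?_⟩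
      simp only [Finset.mem_filter, Finset.mem_univ, true_and, hcut]
      refine ⟨?_, by simpa using Nat.one_le_iff_ne_zero.mp hk1 |> Nat.pos_of_ne_zero, le_refl k⟩
      rw [Fin.lt_def]
      simpa using Nat.one_le_iff_ne_zero.mp hk1 |> Nat.pos_of_ne_zero
    omega
  have hcardall : (Finset.univ.filter fun pr : Fin n × Fin n => pr.1 < pr.2).card
      ≤ ∑ i ∈ Finset.range n, i := by
    rw [Finset.card_eq_sum_card_fiberwise
      (f := Prod.snd) (t := Finset.univ) (fun x _ => Finset.mem_univ _)]
    have hfibj : ∀ j : Fin n,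
        ((Finset.univ.filter fun pr : Fin n × Fin n => pr.1 < pr.2).filter
          (fun pr => pr.2 = j)).card = (j : ℕ) := by
      intro j
      rw [← Fin.card_Iio (b := j)]
      refine Finset.card_nbij' (fun pr => pr.1) (fun i => (i, j)) ?_ ?_ ?_ ?_
      · intro pr hpr
        simp only [Finset.mem_coe, Finset.mem_filter, Finset.mem_univ, true_and] at hpr
        rw [Finset.mem_coe, Finset.mem_Iio, ← hpr.2]
        exact hpr.1
      · intro i hi
        rw [Finset.mem_coe, Finset.mem_Iio] at hi
        simp [hi]
      · intro pr hpr
        simp only [Finset.mem_coe, Finset.mem_filter, Finset.mem_univ, true_and] at hpr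
        rw [← hpr.2]
      · intro i _
        rfl
    rw [Finset.sum_congr rfl (fun j _ => hfibj j)]
    rw [Fin.sum_univ_eq_sum_range (fun i => i) n]
  have hdeg : Δ.totalDegree < ∑ i ∈ Finset.range n, i := by omega
  -- whole-group alternating sum vanishes
  have hfull : ∑ w : Perm (Fin n), G w = 0 := by
    rw [hG]
    exact alt_sum_eq_zero Δ hdeg
  -- hence the sum over representatives vanishes
  have hPR : ∑ r ∈ R, G r = 0 := by
    have h1 : Hf.card • (∑ r ∈ R, G r) = 0 := by
      rw [Finset.smul_sum, Finset.sum_congr rfl (fun r hr => (hinner r hr).symm), hfib, hfull]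
    have h2 : ((Hf.card : ℕ) : P) * (∑ r ∈ R, G r) = 0 := by
      rw [← nsmul_eq_mul]
      exact h1
    rcases mul_eq_zero.mp h2 with h | h
    · exact absurd (by exact_mod_cast h : Hf.card = 0) (Finset.card_ne_zero_of_mem hH1)
    · exact h
  -- rewrite each fraction
  have hV0 : σA (Vv K n) ≠ 0 := by
    rw [map_ne_zero_iff _ (IsFractionRing.injective P F)]
    exact Vv_ne_zero
  have hterm : ∀ w : Perm (Fin n),
      (1 : F) / σA (rename (⇑w) D) = σA (G w) / σA (Vv K n) := by
    intro w
    have hrD0 : rename (⇑w) D ≠ 0 := by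
      rw [map_ne_zero_iff _ (rename_injective (⇑w) w.injective)]
      exact hD0
    have hx : σA (rename (⇑w) D) ≠ 0 := by
      rw [map_ne_zero_iff _ (IsFractionRing.injective P F)]
      exact hrD0
    rw [div_eq_div_iff hx hV0, one_mul, ← map_mul]
    congr 1
    symm
    rw [hG]
    simp only
    have hmul : rename (⇑w) Δ * rename (⇑w) D = rename (⇑w) (Vv K n) := by
      rw [← map_mul, mul_comm Δ D, hDV]
    calc sgn w * rename (⇑w) Δ * rename (⇑w) D = sgn w * (rename (⇑w) Δ * rename (⇑w) D) := by
          ring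
      _ = sgn w * (sgn w * Vv K n) := by rw [hmul, rename_Vv]
      _ = (sgn w * sgn w) * Vv K n := by ring
      _ = Vv K n := by rw [sgn_sq, one_mul]
  calc ∑ w ∈ R, (1 : F) / σA (rename (⇑w) D) = ∑ w ∈ R, σA (G w) / σA (Vv K n) :=
        Finset.sum_congr rfl (fun w _ => hterm w)
    _ = σA (∑ w ∈ R, G w) / σA (Vv K n) := by rw [map_sum, Finset.sum_div]
    _ = 0 := by rw [hPR, map_zero, zero_div]
end
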